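/- Let A^I = [A̲, A̅] be an interval tensor in T_{m,n} with both A̲ and A̅ circulant. Then the following are equivalent: (a) A^I is an interval double B-tensor; (b) A^I is an interval B-tensor; (c) a̲_{1...1} > −Σ_{(i_2,...,i_m)≠(1,...,1)} a̲_{1 i_2...i_m}, and for all (j_2,...,j_m) ≠ (1,...,1), a̲_{1...1} − a̅_{1 j_2...j_m} > Σ_{(i_2,...,i_m)≠(1,...,1), (i_2,...,i_m)≠(j_2,...,j_m)} (a̅_{1 j_2...j_m} − a̲_{1 i_2...i_m}). -/

import Mathlib

open Finset

namespace TensorB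

abbrev Tensor (n m : ℕ) := Fin n → (Fin (m-1) → Fin n) → ℝ

/-- The diagonal index tuple `(i,...,i)`. -/
def diag {n m : ℕ} (i : Fin n) : Fin (m-1) → Fin n := fun _ => i

/-- Sum of the `i`-th row of `A`. -/
def rowSum {n m : ℕ} (A : Tensor n m) (i : Fin n) : ℝ :=
  ∑ j : Fin (m-1) → Fin n, A i j

/-- Off-diagonal index tuples of row `i`. -/
def offIdx (n m : ℕ) (i : Fin n) : Finset (Fin (m-1) → Fin n) :=
  Finset.univ.filter (fun j => j ≠ diag i)

/-- `γ_i^+(A) = max {0, off-diagonal entries of row i}`. -/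
def gammaPlus {n m : ℕ} (A : Tensor n m) (i : Fin n) : ℝ :=
  (offIdx n m i).fold max 0 (A i)

/-- B-tensor. -/
def IsBTensor {n m : ℕ} (A : Tensor n m) : Prop :=
  ∀ i : Fin n, 0 < rowSum A i ∧
    ∀ j, j ≠ diag i → A i j < (1 / (n : ℝ) ^ (m - 1)) * rowSum A i

/-- The deficiency sum `Σ_{(i_2,...,i_m)≠(i,...,i)} (γ_i^+(A) − a_{i i_2...i_m})`. -/
def defSum {n m : ℕ} (A : Tensor n m) (i : Fin n) : ℝ :=
  ∑ j ∈ offIdx n m i, (gammaPlus A i - A i j)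

/-- Double B-tensor. -/
def IsDoubleBTensor {n m : ℕ} (A : Tensor n m) : Prop :=
  ∀ i : Fin n,
    gammaPlus A i < A i (diag i) ∧
    defSum A i ≤ A i (diag i) - gammaPlus A i ∧
    ∀ j, j ≠ i →
      defSum A i * defSum A j <
        (A i (diag i) - gammaPlus A i) * (A j (diag j) - gammaPlus A j)

/-- Z-tensor: all off-diagonal entries nonpositive. -/
def IsZTensor {n m : ℕ} (A : Tensor n m) : Prop :=
  ∀ i : Fin n, ∀ j, j ≠ diag i → A i j ≤ 0

/-- Strictly diagonally dominant tensor. -/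
def IsSDD {n m : ℕ} (A : Tensor n m) : Prop :=
  ∀ i : Fin n, ∑ j ∈ offIdx n m i, |A i j| < A i (diag i)

/-- Circulant tensor. -/
def IsCirculant {n m : ℕ} [NeZero n] (A : Tensor n m) : Prop :=
  ∀ (i : Fin n) (j : Fin (m-1) → Fin n), A i j = A (i + 1) (fun l => j l + 1)

/-- Membership in the interval tensor `[L, U]`. -/
def Mem {n m : ℕ} (L U A : Tensor n m) : Prop :=
  ∀ i j, L i j ≤ A i j ∧ A i j ≤ U i j

/-- Entrywise `L ≤ U`, so that `[L,U]` is a genuine interval tensor. -/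
def IntervalValid {n m : ℕ} (L U : Tensor n m) : Prop :=
  ∀ i j, L i j ≤ U i j

/-! A tensor is a B-tensor exactly when, in every row, `γ⁺` lies below the row mean, i.e.
`a_{i…i} - γ_i⁺ > Σ_j (γ_i⁺ - a_{ij})`. Over the interval `[L, U]` the worst member for row 0 and
a fixed off-diagonal tuple `jt` is `L` with the entry at `jt` raised to `U`; raising that entry
along its whole circulant orbit gives a circulant member. All rows of a circulant tensor carry
the same data, so the pairwise double B-condition for rows `i` and `i + 1` reads
`d² < (a - γ⁺)²`, which is the B-condition. Conversely, circulance of `L` and `U` lets a cyclic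
rotation move any row of a member to row 0 while staying in the interval. -/

section Rows

variable {n m : ℕ}

lemma mem_offIdx {i : Fin n} {j : Fin (m-1) → Fin n} : j ∈ offIdx n m i ↔ j ≠ diag i := by
  simp [offIdx]

lemma rowSum_eq_add_sum_offIdx (A : Tensor n m) (i : Fin n) :
    rowSum A i = A i (diag i) + ∑ j ∈ offIdx n m i, A i j := by
  rw [rowSum, offIdx, Finset.filter_ne', Finset.add_sum_erase _ _ (mem_univ _)]

lemma sum_offIdx_eq_add_sum_filter_ne {i : Fin n} {jt : Fin (m-1) → Fin n} (hjt : jt ≠ diag i)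
    (f : (Fin (m-1) → Fin n) → ℝ) :
    ∑ j ∈ offIdx n m i, f j = f jt + ∑ j ∈ (offIdx n m i).filter (fun j => j ≠ jt), f j := by
  rw [Finset.filter_ne', Finset.add_sum_erase _ _ (mem_offIdx.mpr hjt)]

lemma card_offIdx_add_one (i : Fin n) :
    ((offIdx n m i).card : ℝ) + 1 = (n : ℝ) ^ (m - 1) := by
  rw [offIdx, Finset.filter_ne', ← Nat.cast_add_one, Finset.card_erase_add_one (mem_univ _)]
  simp

lemma le_gammaPlus {A : Tensor n m} {i : Fin n} {j : Fin (m-1) → Fin n} (hj : j ≠ diag i) :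
    A i j ≤ gammaPlus A i :=
  ((Finset.fold_max_le _).mp le_rfl).2 j (mem_offIdx.mpr hj)

lemma gammaPlus_nonneg (A : Tensor n m) (i : Fin n) : 0 ≤ gammaPlus A i :=
  ((Finset.fold_max_le _).mp le_rfl).1

lemma defSum_nonneg (A : Tensor n m) (i : Fin n) : 0 ≤ defSum A i :=
  Finset.sum_nonneg fun _ hj => sub_nonneg.mpr (le_gammaPlus (mem_offIdx.mp hj))

lemma defSum_eq (A : Tensor n m) (i : Fin n) :
    defSum A i = (offIdx n m i).card * gammaPlus A i - ∑ j ∈ offIdx n m i, A i j := by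
  simp [defSum, Finset.sum_sub_distrib, nsmul_eq_mul]

lemma defSum_lt_sub_gammaPlus_iff (A : Tensor n m) (i : Fin n) :
    defSum A i < A i (diag i) - gammaPlus A i ↔
      gammaPlus A i < rowSum A i / (n : ℝ) ^ (m - 1) := by
  have hN : (0 : ℝ) < (n : ℝ) ^ (m - 1) := by have := i.pos; positivity
  rw [lt_div_iff₀ hN, defSum_eq, rowSum_eq_add_sum_offIdx, ← card_offIdx_add_one i]
  constructor <;> intro h <;> linarith

lemma isBTensor_iff_forall_gammaPlus_lt (A : Tensor n m) :
    IsBTensor A ↔ ∀ i, gammaPlus A i < rowSum A i / (n : ℝ) ^ (m - 1) := by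
  refine forall_congr' fun i => ?_
  have hN : (0 : ℝ) < (n : ℝ) ^ (m - 1) := by have := i.pos; positivity
  simp only [gammaPlus, Finset.fold_max_lt, mem_offIdx, one_div_mul_eq_div,
    div_pos_iff_of_pos_right hN]

lemma isBTensor_iff_forall_defSum_lt (A : Tensor n m) :
    IsBTensor A ↔ ∀ i, defSum A i < A i (diag i) - gammaPlus A i := by
  simp only [isBTensor_iff_forall_gammaPlus_lt, defSum_lt_sub_gammaPlus_iff]

lemma IsBTensor.isDoubleBTensor {A : Tensor n m} (hA : IsBTensor A) : IsDoubleBTensor A := by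
  rw [isBTensor_iff_forall_defSum_lt] at hA
  exact fun i => ⟨by linarith [hA i, defSum_nonneg A i], (hA i).le,
    fun j _ => mul_lt_mul'' (hA i) (hA j) (defSum_nonneg A i) (defSum_nonneg A j)⟩

lemma sum_filter_ne_sub_lt_of_defSum_lt {A : Tensor n m} {i : Fin n}
    (hA : defSum A i < A i (diag i) - gammaPlus A i) {jt : Fin (m-1) → Fin n}
    (hjt : jt ≠ diag i) :
    ∑ j ∈ (offIdx n m i).filter (fun j => j ≠ jt), (A i jt - A i j) < A i (diag i) - A i jt := by
  have hsplit := sum_offIdx_eq_add_sum_filter_ne hjt (fun j => gammaPlus A i - A i j)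
  have hle : ∑ j ∈ (offIdx n m i).filter (fun j => j ≠ jt), (A i jt - A i j)
      ≤ ∑ j ∈ (offIdx n m i).filter (fun j => j ≠ jt), (gammaPlus A i - A i j) :=
    Finset.sum_le_sum fun j _ => sub_le_sub_right (le_gammaPlus hjt) _
  rw [← defSum] at hsplit
  linarith [le_gammaPlus (A := A) hjt]

lemma defSum_lt_of_mem {L U A : Tensor n m} (hA : Mem L U A) {i : Fin n}
    (hdiag : -∑ j ∈ offIdx n m i, L i j < L i (diag i))
    (hoff : ∀ jt, jt ≠ diag i →
      ∑ j ∈ (offIdx n m i).filter (fun j => j ≠ jt), (U i jt - L i j) <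
        L i (diag i) - U i jt) :
    defSum A i < A i (diag i) - gammaPlus A i := by
  have hLA : L i (diag i) ≤ A i (diag i) := (hA i (diag i)).1
  -- `γ⁺` is either `0` or attained at an off-diagonal tuple
  rcases (Finset.le_fold_max (gammaPlus A i)).mp le_rfl with hγ | ⟨jt, hjt, hγ⟩
  · have hγ0 : gammaPlus A i = 0 := le_antisymm hγ (gammaPlus_nonneg A i)
    have hsum : ∑ j ∈ offIdx n m i, L i j ≤ ∑ j ∈ offIdx n m i, A i j :=
      Finset.sum_le_sum fun j _ => (hA i j).1
    simp only [defSum, hγ0, zero_sub, Finset.sum_neg_distrib]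
    linarith
  · have hjt' : jt ≠ diag i := mem_offIdx.mp hjt
    have hγjt : gammaPlus A i = A i jt := le_antisymm hγ (le_gammaPlus hjt')
    have hsum : ∑ j ∈ (offIdx n m i).filter (fun j => j ≠ jt), (A i jt - A i j)
        ≤ ∑ j ∈ (offIdx n m i).filter (fun j => j ≠ jt), (U i jt - L i j) :=
      Finset.sum_le_sum fun j _ => sub_le_sub (hA i jt).2 (hA i j).1
    rw [defSum, sum_offIdx_eq_add_sum_filter_ne hjt', hγjt, sub_self, zero_add]
    linarith [hoff jt hjt', (hA i jt).2]

end Rows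

section Circulant

variable {n m : ℕ} [NeZero n]

def shiftIdx (k : Fin n) : (Fin (m-1) → Fin n) ≃ (Fin (m-1) → Fin n) :=
  Equiv.piCongrRight fun _ => Equiv.addRight k

@[simp] lemma shiftIdx_apply (k : Fin n) (j : Fin (m-1) → Fin n) :
    shiftIdx k j = fun l => j l + k := rfl

lemma shiftIdx_diag (k i : Fin n) : shiftIdx k (diag i : Fin (m-1) → Fin n) = diag (i + k) :=
  rfl

lemma offIdx_add (i k : Fin n) :
    offIdx n m (i + k) = (offIdx n m i).map (shiftIdx k).toEmbedding := by
  ext j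
  rw [Finset.mem_map_equiv, mem_offIdx, mem_offIdx, Ne, Ne, Equiv.symm_apply_eq, shiftIdx_diag]

section Shift

variable {A B : Tensor n m} {i k : Fin n} (h : ∀ j, B (i + k) (shiftIdx k j) = A i j)
include h

lemma gammaPlus_eq_of_shift : gammaPlus B (i + k) = gammaPlus A i := by
  rw [gammaPlus, offIdx_add, Finset.fold_map]
  exact Finset.fold_congr fun j _ => h j

lemma defSum_eq_of_shift : defSum B (i + k) = defSum A i := by
  rw [defSum, defSum, offIdx_add, Finset.sum_map, gammaPlus_eq_of_shift h]
  exact Finset.sum_congr rfl fun j _ => by rw [Equiv.coe_toEmbedding, h j]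

lemma apply_diag_eq_of_shift : B (i + k) (diag (i + k)) = A i (diag i) := by
  rw [← shiftIdx_diag, h]

end Shift

open Fin.NatCast in
lemma IsCirculant.apply_shiftIdx {A : Tensor n m} (hA : IsCirculant A) (i k : Fin n)
    (j : Fin (m-1) → Fin n) : A (i + k) (shiftIdx k j) = A i j := by
  suffices ∀ t : ℕ, ∀ i j, A (i + t) (shiftIdx t j) = A i j by
    simpa only [Fin.cast_val_eq_self] using this k.val i j
  intro t
  induction t with
  | zero => intro i j; simp
  | succ t ih =>
    intro i j
    rw [← ih i j, hA (i + t) (shiftIdx t j)]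
    simp only [shiftIdx_apply, Nat.cast_succ, add_assoc]

lemma IsCirculant.isBTensor_of_isDoubleBTensor {A : Tensor n m} (hA : IsCirculant A)
    (hD : IsDoubleBTensor A) : IsBTensor A := by
  rw [isBTensor_iff_forall_defSum_lt]
  intro i
  obtain ⟨hγ, -, hpair⟩ := hD i
  by_cases hi : i + 1 = i
  -- then `n = 1`: there are no off-diagonal tuples and no pairs of rows
  · have : Subsingleton (Fin n) :=
      Fin.subsingleton_iff_le_one.mpr (Fin.zero_eq_one_iff.mp (add_eq_left.mp hi).symm).le
    have hoff : offIdx n m i = ∅ :=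
      Finset.eq_empty_of_forall_notMem fun j hj => mem_offIdx.mp hj (Subsingleton.elim _ _)
    rw [defSum, hoff, Finset.sum_empty]
    linarith
  · have hrow := hA.apply_shiftIdx i 1
    have h := hpair (i + 1) hi
    rw [defSum_eq_of_shift hrow, gammaPlus_eq_of_shift hrow, apply_diag_eq_of_shift hrow] at h
    exact (mul_self_lt_mul_self_iff (defSum_nonneg A i) (by linarith)).mpr h

/-- `L` with the entries on the circulant orbit of `(0, jt)` replaced by those of `U`. -/
def raiseOrbit (L U : Tensor n m) (jt : Fin (m-1) → Fin n) : Tensor n m :=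
  fun i j => if shiftIdx (-i) j = jt then U i j else L i j

lemma isCirculant_raiseOrbit {L U : Tensor n m} (hcL : IsCirculant L) (hcU : IsCirculant U)
    (jt : Fin (m-1) → Fin n) : IsCirculant (raiseOrbit L U jt) := by
  intro i j
  have horbit : shiftIdx (-(i + 1)) (fun l => j l + 1) = shiftIdx (-i) j := by
    funext l
    simp only [shiftIdx_apply]
    abel
  simp only [raiseOrbit, horbit, ← hcL i j, ← hcU i j]

lemma mem_raiseOrbit {L U : Tensor n m} (hLU : IntervalValid L U) (jt : Fin (m-1) → Fin n) :
    Mem L U (raiseOrbit L U jt) := by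
  intro i j
  unfold raiseOrbit
  split_ifs
  · exact ⟨hLU i j, le_rfl⟩
  · exact ⟨le_rfl, hLU i j⟩

lemma raiseOrbit_zero_apply (L U : Tensor n m) (jt j : Fin (m-1) → Fin n) :
    raiseOrbit L U jt 0 j = if j = jt then U 0 j else L 0 j := by
  simp [raiseOrbit]

end Circulant

section Interval

variable {n m : ℕ} [NeZero n] {L U : Tensor n m}

lemma isBTensor_of_mem (hcL : IsCirculant L) (hcU : IsCirculant U)
    (hdiag : -∑ j ∈ offIdx n m 0, L 0 j < L 0 (diag 0))
    (hoff : ∀ jt, jt ≠ diag (0 : Fin n) →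
      ∑ j ∈ (offIdx n m 0).filter (fun j => j ≠ jt), (U 0 jt - L 0 j) < L 0 (diag 0) - U 0 jt)
    {A : Tensor n m} (hA : Mem L U A) : IsBTensor A := by
  rw [isBTensor_iff_forall_defSum_lt]
  intro k
  let R : Tensor n m := fun i j => A (i + k) (shiftIdx k j)
  have hR : Mem L U R := fun i j => by
    rw [← hcL.apply_shiftIdx i k j, ← hcU.apply_shiftIdx i k j]
    exact hA _ _
  have hrow : ∀ j, A (0 + k) (shiftIdx k j) = R 0 j := fun _ => rfl
  have h := defSum_lt_of_mem hR hdiag hoff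
  rwa [← defSum_eq_of_shift hrow, ← gammaPlus_eq_of_shift hrow, ← apply_diag_eq_of_shift hrow,
    zero_add] at h

lemma rowZero_bounds_of_forall_isBTensor (hLU : IntervalValid L U) (hcL : IsCirculant L)
    (hcU : IsCirculant U) (h : ∀ A, Mem L U A → IsCirculant A → IsBTensor A) :
    -∑ j ∈ offIdx n m 0, L 0 j < L 0 (diag 0) ∧
      ∀ jt, jt ≠ diag (0 : Fin n) →
        ∑ j ∈ (offIdx n m 0).filter (fun j => j ≠ jt), (U 0 jt - L 0 j) <
          L 0 (diag 0) - U 0 jt := by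
  refine ⟨?_, fun jt hjt => ?_⟩
  · have hL := (h L (fun i j => ⟨le_rfl, hLU i j⟩) hcL 0).1
    rw [rowSum_eq_add_sum_offIdx] at hL
    linarith
  · have hW := (isBTensor_iff_forall_defSum_lt _).mp
      (h _ (mem_raiseOrbit hLU jt) (isCirculant_raiseOrbit hcL hcU jt)) 0
    have h := sum_filter_ne_sub_lt_of_defSum_lt hW hjt
    rwa [Finset.sum_congr rfl fun j hj => by
        rw [raiseOrbit_zero_apply, raiseOrbit_zero_apply, if_pos rfl,
          if_neg (Finset.mem_filter.mp hj).2],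
      raiseOrbit_zero_apply, raiseOrbit_zero_apply, if_pos rfl, if_neg hjt.symm] at h

end Interval

theorem stmt17 {n m : ℕ} [NeZero n] (L U : Tensor n m) (hLU : IntervalValid L U)
    (hcL : IsCirculant L) (hcU : IsCirculant U) :
    ((∀ A, Mem L U A → IsDoubleBTensor A) ↔ (∀ A, Mem L U A → IsBTensor A)) ∧
    ((∀ A, Mem L U A → IsBTensor A) ↔
      ((-∑ j ∈ offIdx n m 0, L 0 j) < L 0 (diag 0) ∧
        ∀ jt, jt ≠ diag (0 : Fin n) →
          ∑ j ∈ (offIdx n m 0).filter (fun j => j ≠ jt), (U 0 jt - L 0 j) <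
            L 0 (diag 0) - U 0 jt)) := by
  have hcond := rowZero_bounds_of_forall_isBTensor hLU hcL hcU
  refine ⟨⟨fun hD => ?_, fun hB A hA => (hB A hA).isDoubleBTensor⟩,
    ⟨fun hB => hcond fun A hA _ => hB A hA,
      fun ⟨hdiag, hoff⟩ _ hA => isBTensor_of_mem hcL hcU hdiag hoff hA⟩⟩
  obtain ⟨hdiag, hoff⟩ := hcond fun A hA hcA => hcA.isBTensor_of_isDoubleBTensor (hD A hA)
  exact fun _ hA => isBTensor_of_mem hcL hcU hdiag hoff hA

end TensorB
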